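/- Let Γ be a group, R a Γ-graded ring, and 𝒫 a gr-prime matrix ideal of R. Let A be an n×n matrix over R homogeneous of distribution (ᾱ, β̄) and let B be an n×n matrix over R homogeneous of distribution (β̄, δ̄). Then AB ∈ 𝒫 if and only if A ⊕ B ∈ 𝒫. -/

import Mathlib

open Matrix

universe u v w

section GradedDefs

variable {Γ : Type u} [Group Γ] {R : Type v} [Ring R]

/-- `A` is a homogeneous matrix of distribution `(α, β)`:
its `(i,j)` entry lies in `𝒜 (α i * (β j)⁻¹)`. -/
def IsHomog (𝒜 : Γ → AddSubgroup R) {m n : ℕ}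
    (A : Matrix (Fin m) (Fin n) R) (α : Fin m → Γ) (β : Fin n → Γ) : Prop :=
  ∀ i j, A i j ∈ 𝒜 (α i * (β j)⁻¹)

/-- `A` is a homogeneous matrix for some distribution. -/
def IsHomogSq (𝒜 : Γ → AddSubgroup R) {m n : ℕ}
    (A : Matrix (Fin m) (Fin n) R) : Prop :=
  ∃ (α : Fin m → Γ) (β : Fin n → Γ), IsHomog 𝒜 A α β

end GradedDefs

/-- Square matrices over `R` of arbitrary finite size. -/
abbrev SqMat (R : Type v) : Type v := Σ n : ℕ, Matrix (Fin n) (Fin n) R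

section GradedDefs

variable {Γ : Type u} [Group Γ] {R : Type v} [Ring R]

/-- Diagonal sum `A ⊕ B` of two (rectangular) matrices. -/
def diagSum {m n m' n' : ℕ} (A : Matrix (Fin m) (Fin n) R)
    (B : Matrix (Fin m') (Fin n') R) : Matrix (Fin (m + m')) (Fin (n + n')) R :=
  Matrix.reindex finSumFinEquiv finSumFinEquiv (Matrix.fromBlocks A 0 0 B)

/-- Block lower triangular matrix `[[A, 0], [C, B]]`. -/
def lowerBlockSum {n m : ℕ} (A : Matrix (Fin n) (Fin n) R) (B : Matrix (Fin m) (Fin m) R)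
    (C : Matrix (Fin m) (Fin n) R) : Matrix (Fin (n + m)) (Fin (n + m)) R :=
  Matrix.reindex finSumFinEquiv finSumFinEquiv (Matrix.fromBlocks A 0 C B)

/-- Block upper triangular matrix `[[A, C], [0, B]]` with rectangular blocks. -/
def upperBlockSum {m n m' n' : ℕ} (A : Matrix (Fin m) (Fin n) R)
    (B : Matrix (Fin m') (Fin n') R) (C : Matrix (Fin m) (Fin n') R) :
    Matrix (Fin (m + m')) (Fin (n + n')) R :=
  Matrix.reindex finSumFinEquiv finSumFinEquiv (Matrix.fromBlocks A C 0 B)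

/-- `C` is the determinantal sum of `A` and `B` with respect to some column or row:
`A` and `B` agree away from that column (row) and the distinguished column (row) of `C`
is the sum of the corresponding columns (rows) of `A` and `B`. -/
def IsDetSum {n : ℕ} (A B C : Matrix (Fin n) (Fin n) R) : Prop :=
  (∃ c : Fin n, (∀ i j, j ≠ c → A i j = B i j) ∧
      ∀ i j, C i j = if j = c then A i j + B i j else A i j) ∨
  (∃ r : Fin n, (∀ i j, i ≠ r → A i j = B i j) ∧
      ∀ i j, C i j = if i = r then A i j + B i j else A i j)

/-- `C` is the determinantal sum of the homogeneous matrices `A` and `B`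
(which have a common distribution). -/
def GrDetSum (𝒜 : Γ → AddSubgroup R) {n : ℕ} (A B C : Matrix (Fin n) (Fin n) R) : Prop :=
  (∃ α β : Fin n → Γ, IsHomog 𝒜 A α β ∧ IsHomog 𝒜 B α β) ∧ IsDetSum A B C

/-- A square homogeneous matrix `A` is gr-full if whenever `A = P * Q` with `P`
homogeneous of distribution `(α, lam)` and `Q` homogeneous of distribution `(lam, β)`
where `lam` has length `r`, then `r ≥ n`. -/
def IsGrFull (𝒜 : Γ → AddSubgroup R) {n : ℕ} (A : Matrix (Fin n) (Fin n) R) : Prop :=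
  ∀ (r : ℕ) (P : Matrix (Fin n) (Fin r) R) (Q : Matrix (Fin r) (Fin n) R)
    (α : Fin n → Γ) (lam : Fin r → Γ) (β : Fin n → Γ),
    IsHomog 𝒜 P α lam → IsHomog 𝒜 Q lam β → A = P * Q → n ≤ r

/-- gr-prime matrix ideal: a set of square homogeneous matrices satisfying (PM1)–(PM6). -/
structure IsGrPrimeMatrixIdeal (𝒜 : Γ → AddSubgroup R) (P : Set (SqMat R)) : Prop where
  subset_homog : ∀ p ∈ P, IsHomogSq 𝒜 p.2
  pm1 : ∀ {n : ℕ} (A : Matrix (Fin n) (Fin n) R),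
    IsHomogSq 𝒜 A → ¬ IsGrFull 𝒜 A → (⟨n, A⟩ : SqMat R) ∈ P
  pm2 : ∀ {n : ℕ} (A B C : Matrix (Fin n) (Fin n) R),
    (⟨n, A⟩ : SqMat R) ∈ P → (⟨n, B⟩ : SqMat R) ∈ P → GrDetSum 𝒜 A B C →
    (⟨n, C⟩ : SqMat R) ∈ P
  pm3 : ∀ {m n : ℕ} (A : Matrix (Fin m) (Fin m) R) (B : Matrix (Fin n) (Fin n) R),
    (⟨m, A⟩ : SqMat R) ∈ P → IsHomogSq 𝒜 B → (⟨m + n, diagSum A B⟩ : SqMat R) ∈ P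
  pm4 : ∀ {m n : ℕ} (A : Matrix (Fin m) (Fin m) R) (B : Matrix (Fin n) (Fin n) R),
    IsHomogSq 𝒜 A → IsHomogSq 𝒜 B → (⟨m + n, diagSum A B⟩ : SqMat R) ∈ P →
    (⟨m, A⟩ : SqMat R) ∈ P ∨ (⟨n, B⟩ : SqMat R) ∈ P
  pm5 : (⟨1, (1 : Matrix (Fin 1) (Fin 1) R)⟩ : SqMat R) ∉ P
  pm6 : ∀ {n : ℕ} (A : Matrix (Fin n) (Fin n) R) (e f : Equiv.Perm (Fin n)),
    (⟨n, A⟩ : SqMat R) ∈ P → (⟨n, A.submatrix ⇑e ⇑f⟩ : SqMat R) ∈ P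

/-- gr-matrix ideal: a set of square homogeneous matrices satisfying (I1)–(I5). -/
structure IsGrMatrixIdeal (𝒜 : Γ → AddSubgroup R) (I : Set (SqMat R)) : Prop where
  subset_homog : ∀ p ∈ I, IsHomogSq 𝒜 p.2
  i1 : ∀ {n : ℕ} (A : Matrix (Fin n) (Fin n) R),
    IsHomogSq 𝒜 A → ¬ IsGrFull 𝒜 A → (⟨n, A⟩ : SqMat R) ∈ I
  i2 : ∀ {n : ℕ} (A B C : Matrix (Fin n) (Fin n) R),
    (⟨n, A⟩ : SqMat R) ∈ I → (⟨n, B⟩ : SqMat R) ∈ I → GrDetSum 𝒜 A B C →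
    (⟨n, C⟩ : SqMat R) ∈ I
  i3 : ∀ {m n : ℕ} (A : Matrix (Fin m) (Fin m) R) (B : Matrix (Fin n) (Fin n) R),
    (⟨m, A⟩ : SqMat R) ∈ I → IsHomogSq 𝒜 B → (⟨m + n, diagSum A B⟩ : SqMat R) ∈ I
  i4 : ∀ {n : ℕ} (A : Matrix (Fin n) (Fin n) R) (e f : Equiv.Perm (Fin n)),
    (⟨n, A⟩ : SqMat R) ∈ I → (⟨n, A.submatrix ⇑e ⇑f⟩ : SqMat R) ∈ I
  i5 : ∀ {n : ℕ} (A : Matrix (Fin n) (Fin n) R),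
    (⟨n + 1, diagSum A (1 : Matrix (Fin 1) (Fin 1) R)⟩ : SqMat R) ∈ I →
    (⟨n, A⟩ : SqMat R) ∈ I

/-- The diagonal sum of `r` copies of `A`. -/
def diagIter {n : ℕ} (A : Matrix (Fin n) (Fin n) R) :
    (r : ℕ) → Matrix (Fin (n * r)) (Fin (n * r)) R
  | 0 => 0
  | r + 1 => diagSum (diagIter A r) A

/-- Iterated determinantal sums (with arbitrary bracketing) of elements of `W`. -/
inductive IsDetSumOf (𝒜 : Γ → AddSubgroup R) (W : Set (SqMat R)) : SqMat R → Prop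
  | base (p : SqMat R) (hp : p ∈ W) : IsDetSumOf 𝒜 W p
  | step {n : ℕ} (A B C : Matrix (Fin n) (Fin n) R)
      (hA : IsDetSumOf 𝒜 W ⟨n, A⟩) (hB : IsDetSumOf 𝒜 W ⟨n, B⟩)
      (h : GrDetSum 𝒜 A B C) : IsDetSumOf 𝒜 W ⟨n, C⟩

/-- The homogeneous rational closure of degree `γ`: entries `(j,i)` of inverses of matrices
`A^f` with `A ∈ Sig` homogeneous of distribution `(α, β)` and `β j * (α i)⁻¹ = γ`. -/
def RatCl (𝒜 : Γ → AddSubgroup R) {S : Type w} [Ring S] (Sig : Set (SqMat R)) (f : R →+* S)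
    (γ : Γ) : Set S :=
  {x | ∃ (n : ℕ) (A : Matrix (Fin n) (Fin n) R) (α β : Fin n → Γ) (i j : Fin n)
        (B : Matrix (Fin n) (Fin n) S),
      (⟨n, A⟩ : SqMat R) ∈ Sig ∧ IsHomog 𝒜 A α β ∧ β j * (α i)⁻¹ = γ ∧
      (A.map ⇑f) * B = 1 ∧ B * (A.map ⇑f) = 1 ∧ B j i = x}

/-- gr-lower semimultiplicative set of square homogeneous matrices. -/
def IsGrLowerSemimult (𝒜 : Γ → AddSubgroup R) (Sig : Set (SqMat R)) : Prop :=
  ((⟨1, (1 : Matrix (Fin 1) (Fin 1) R)⟩ : SqMat R) ∈ Sig) ∧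
  ∀ {n m : ℕ} (A : Matrix (Fin n) (Fin n) R) (B : Matrix (Fin m) (Fin m) R)
    (α β : Fin n → Γ) (α' β' : Fin m → Γ) (C : Matrix (Fin m) (Fin n) R),
    (⟨n, A⟩ : SqMat R) ∈ Sig → (⟨m, B⟩ : SqMat R) ∈ Sig →
    IsHomog 𝒜 A α β → IsHomog 𝒜 B α' β' → IsHomog 𝒜 C α' β →
    (⟨n + m, lowerBlockSum A B C⟩ : SqMat R) ∈ Sig

end GradedDefs

/-- A homomorphism of `Γ`-graded rings from `(R, 𝒜)` to a `Γ`-graded division ring. -/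
structure GrDivRingHom (Γ : Type u) [Group Γ] [DecidableEq Γ] (R : Type v) [Ring R]
    (𝒜 : Γ → AddSubgroup R) where
  K : Type (max u v)
  [ringK : Ring K]
  [nontrivialK : Nontrivial K]
  grading : Γ → AddSubgroup K
  internal : DirectSum.IsInternal grading
  one_mem : (1 : K) ∈ grading 1
  mul_mem : ∀ {γ δ : Γ} {x y : K}, x ∈ grading γ → y ∈ grading δ → x * y ∈ grading (γ * δ)
  isUnit_of_ne : ∀ {γ : Γ} {x : K}, x ∈ grading γ → x ≠ 0 → IsUnit x
  φ : R →+* K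
  map_mem : ∀ {γ : Γ} {r : R}, r ∈ 𝒜 γ → φ r ∈ grading γ

attribute [instance] GrDivRingHom.ringK GrDivRingHom.nontrivialK

/-!
Cohn's argument with elementary operations, in the graded setting. Adding to a column a
homogeneous combination of the other columns does not change membership in `P`: the new matrix
is a determinantal sum of the old one and a matrix with dependent columns, which is not gr-full.
In the same way, filling in the lower-left block of `X ⊕ Y` column by column does not change
membership (the auxiliary matrices now have a zero column in their upper-left block). Hence,
writing `-1` for the negative identity matrix,
`A ⊕ B ~ [[A, 0], [-1, B]] ~ [[A, AB], [-1, 0]] ~ [[-1, 0], [A, AB]] ~ (-1) ⊕ AB ~ AB ⊕ (-1)`,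
where the second step multiplies on the right by `[[1, B], [0, 1]]` and the third and the last
permute rows and columns. Finally `AB ⊕ (-1) ∈ P ↔ AB ∈ P` by (PM3) and (PM4), as `-1 ∉ P`.
-/

@[simp]
lemma Fin.castAdd_ne_natAdd {n m : ℕ} (i : Fin n) (j : Fin m) :
    Fin.castAdd m i ≠ Fin.natAdd n j := by
  simp only [ne_eq, Fin.ext_iff, Fin.val_castAdd, Fin.val_natAdd]
  omega

@[simp]
lemma Fin.natAdd_ne_castAdd {n m : ℕ} (i : Fin m) (j : Fin n) :
    Fin.natAdd n i ≠ Fin.castAdd m j :=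
  (Fin.castAdd_ne_natAdd j i).symm

section Blocks

variable {R : Type v}

def finBlocks {n m n' m' : ℕ} (X : Matrix (Fin n) (Fin n') R) (Y : Matrix (Fin n) (Fin m') R)
    (Z : Matrix (Fin m) (Fin n') R) (W : Matrix (Fin m) (Fin m') R) :
    Matrix (Fin (n + m)) (Fin (n' + m')) R :=
  reindex finSumFinEquiv finSumFinEquiv (fromBlocks X Y Z W)

variable {n m n' m' : ℕ}

@[simp]
lemma finBlocks_castAdd_castAdd (X : Matrix (Fin n) (Fin n') R) (Y : Matrix (Fin n) (Fin m') R)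
    (Z : Matrix (Fin m) (Fin n') R) (W : Matrix (Fin m) (Fin m') R) (i : Fin n) (j : Fin n') :
    finBlocks X Y Z W (Fin.castAdd m i) (Fin.castAdd m' j) = X i j := by
  simp [finBlocks]

@[simp]
lemma finBlocks_castAdd_natAdd (X : Matrix (Fin n) (Fin n') R) (Y : Matrix (Fin n) (Fin m') R)
    (Z : Matrix (Fin m) (Fin n') R) (W : Matrix (Fin m) (Fin m') R) (i : Fin n) (j : Fin m') :
    finBlocks X Y Z W (Fin.castAdd m i) (Fin.natAdd n' j) = Y i j := by
  simp [finBlocks]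

@[simp]
lemma finBlocks_natAdd_castAdd (X : Matrix (Fin n) (Fin n') R) (Y : Matrix (Fin n) (Fin m') R)
    (Z : Matrix (Fin m) (Fin n') R) (W : Matrix (Fin m) (Fin m') R) (i : Fin m) (j : Fin n') :
    finBlocks X Y Z W (Fin.natAdd n i) (Fin.castAdd m' j) = Z i j := by
  simp [finBlocks]

@[simp]
lemma finBlocks_natAdd_natAdd (X : Matrix (Fin n) (Fin n') R) (Y : Matrix (Fin n) (Fin m') R)
    (Z : Matrix (Fin m) (Fin n') R) (W : Matrix (Fin m) (Fin m') R) (i : Fin m) (j : Fin m') :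
    finBlocks X Y Z W (Fin.natAdd n i) (Fin.natAdd n' j) = W i j := by
  simp [finBlocks]

lemma finBlocks_mul [NonUnitalNonAssocSemiring R] {k k' : ℕ} (X : Matrix (Fin n) (Fin n') R)
    (Y : Matrix (Fin n) (Fin m') R) (Z : Matrix (Fin m) (Fin n') R) (W : Matrix (Fin m) (Fin m') R)
    (X' : Matrix (Fin n') (Fin k) R) (Y' : Matrix (Fin n') (Fin k') R)
    (Z' : Matrix (Fin m') (Fin k) R) (W' : Matrix (Fin m') (Fin k') R) :
    finBlocks X Y Z W * finBlocks X' Y' Z' W' =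
      finBlocks (X * X' + Y * Z') (X * Y' + Y * W') (Z * X' + W * Z') (Z * Y' + W * W') := by
  simp only [finBlocks, reindex_apply, submatrix_mul_equiv, fromBlocks_multiply]

lemma finBlocks_one_one [Zero R] [One R] :
    finBlocks (1 : Matrix (Fin n) (Fin n) R) 0 0 (1 : Matrix (Fin m) (Fin m) R) = 1 := by
  simp [finBlocks, fromBlocks_one]

lemma finBlocks_submatrix_finAddFlip_id (X Y Z W : Matrix (Fin n) (Fin n) R) :
    (finBlocks X Y Z W).submatrix finAddFlip id = finBlocks Z W X Y := by
  ext i j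
  refine Fin.addCases (fun i => ?_) (fun i => ?_) i <;>
    refine Fin.addCases (fun j => ?_) (fun j => ?_) j <;>
    simp only [submatrix_apply, id_eq, finAddFlip_apply_castAdd, finAddFlip_apply_natAdd,
      finBlocks_castAdd_castAdd, finBlocks_castAdd_natAdd, finBlocks_natAdd_castAdd,
      finBlocks_natAdd_natAdd]

lemma finBlocks_submatrix_finAddFlip (X Y Z W : Matrix (Fin n) (Fin n) R) :
    (finBlocks X Y Z W).submatrix finAddFlip finAddFlip = finBlocks W Z Y X := by
  ext i j
  refine Fin.addCases (fun i => ?_) (fun i => ?_) i <;>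
    refine Fin.addCases (fun j => ?_) (fun j => ?_) j <;>
    simp only [submatrix_apply, finAddFlip_apply_castAdd, finAddFlip_apply_natAdd,
      finBlocks_castAdd_castAdd, finBlocks_castAdd_natAdd, finBlocks_natAdd_castAdd,
      finBlocks_natAdd_natAdd]

lemma finBlocks_updateCol_castAdd (X : Matrix (Fin n) (Fin n') R)
    (Y : Matrix (Fin n) (Fin m') R) (Z : Matrix (Fin m) (Fin n') R) (W : Matrix (Fin m) (Fin m') R)
    (t : Fin n') (u : Fin n → R) (w : Fin m → R) :
    (finBlocks X Y Z W).updateCol (Fin.castAdd m' t) (Fin.append u w) =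
      finBlocks (X.updateCol t u) Y (Z.updateCol t w) W := by
  ext i l
  refine Fin.addCases (fun i => ?_) (fun i => ?_) i <;>
    refine Fin.addCases (fun l => ?_) (fun l => ?_) l <;>
    simp [updateCol_apply]

lemma finBlocks_one_mul_finBlocks_one [NonAssocSemiring R] (C D : Matrix (Fin n) (Fin m) R) :
    finBlocks (1 : Matrix (Fin n) (Fin n) R) C 0 (1 : Matrix (Fin m) (Fin m) R) *
      finBlocks 1 D 0 1 = finBlocks 1 (C + D) 0 1 := by
  simp [finBlocks_mul, add_comm]

lemma finBlocks_one_vecMulVec_single [NonAssocSemiring R] (w : Fin n → R) (t : Fin m) :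
    finBlocks (1 : Matrix (Fin n) (Fin n) R) (vecMulVec w (Pi.single t 1)) 0
      (1 : Matrix (Fin m) (Fin m) R) =
      1 + vecMulVec (Fin.append w 0) (Pi.single (Fin.natAdd n t) 1) := by
  ext i l
  refine Fin.addCases (fun i => ?_) (fun i => ?_) i <;>
    refine Fin.addCases (fun l => ?_) (fun l => ?_) l <;>
    simp [vecMulVec_apply, one_apply, Pi.single_apply]

lemma finBlocks_zero_eq_add_vecMulVec_single [NonAssocSemiring R] (X : Matrix (Fin n) (Fin n) R)
    (Y : Matrix (Fin m) (Fin m) R) (Z : Matrix (Fin m) (Fin n) R) (t : Fin n) :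
    finBlocks X 0 Z Y = finBlocks X 0 (Z.updateCol t 0) Y +
      vecMulVec (Fin.append 0 fun i => Z i t) (Pi.single (Fin.castAdd m t) 1) := by
  ext i l
  refine Fin.addCases (fun i => ?_) (fun i => ?_) i <;>
    refine Fin.addCases (fun l => ?_) (fun l => ?_) l <;>
    simp [vecMulVec_apply, updateCol_apply, Pi.single_apply]
  split_ifs <;> simp_all

lemma updateCol_zero_add_vecMulVec_single [NonAssocSemiring R] (C : Matrix (Fin n) (Fin m) R)
    (t : Fin m) : C.updateCol t 0 + vecMulVec (fun i => C i t) (Pi.single t 1) = C := by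
  ext i l
  rcases eq_or_ne l t with rfl | hl <;> simp [vecMulVec_apply, *]

end Blocks

lemma diagSum_eq_finBlocks {R : Type v} [Ring R] {n m n' m' : ℕ} (X : Matrix (Fin n) (Fin n') R)
    (Y : Matrix (Fin m) (Fin m') R) : diagSum X Y = finBlocks X 0 0 Y := rfl

section Homogeneous

variable {Γ : Type u} [Group Γ] {R : Type v} [Ring R] {𝒜 : Γ → AddSubgroup R} {m n k : ℕ}

namespace IsHomog

lemma zero (α : Fin m → Γ) (β : Fin n → Γ) : IsHomog 𝒜 (0 : Matrix (Fin m) (Fin n) R) α β :=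
  fun _ _ => zero_mem _

lemma one (hone : (1 : R) ∈ 𝒜 1) (α : Fin n → Γ) :
    IsHomog 𝒜 (1 : Matrix (Fin n) (Fin n) R) α α := by
  intro i j
  rcases eq_or_ne i j with rfl | h
  · simpa using hone
  · simp [one_apply_ne h]

lemma neg {M : Matrix (Fin m) (Fin n) R} {α β} (hM : IsHomog 𝒜 M α β) : IsHomog 𝒜 (-M) α β :=
  fun i j => neg_mem (hM i j)

lemma mulVec_mem (hmul : ∀ {γ δ : Γ} {x y : R}, x ∈ 𝒜 γ → y ∈ 𝒜 δ → x * y ∈ 𝒜 (γ * δ))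
    {M : Matrix (Fin m) (Fin n) R} {α β} (hM : IsHomog 𝒜 M α β) {c : Fin n → R} {γ : Γ}
    (hc : ∀ i, c i ∈ 𝒜 (β i * γ)) (i : Fin m) : (M *ᵥ c) i ∈ 𝒜 (α i * γ) := by
  simp only [mulVec, dotProduct]
  exact sum_mem fun l _ => by simpa [mul_assoc] using hmul (hM i l) (hc l)

lemma mul (hmul : ∀ {γ δ : Γ} {x y : R}, x ∈ 𝒜 γ → y ∈ 𝒜 δ → x * y ∈ 𝒜 (γ * δ))
    {M : Matrix (Fin m) (Fin n) R} {N : Matrix (Fin n) (Fin k) R} {α β γ}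
    (hM : IsHomog 𝒜 M α β) (hN : IsHomog 𝒜 N β γ) : IsHomog 𝒜 (M * N) α γ :=
  fun i j => hM.mulVec_mem hmul (fun l => hN l j) i

lemma updateCol {M : Matrix (Fin m) (Fin n) R} {α β} (hM : IsHomog 𝒜 M α β) {j : Fin n}
    {v : Fin m → R} (hv : ∀ i, v i ∈ 𝒜 (α i * (β j)⁻¹)) : IsHomog 𝒜 (M.updateCol j v) α β := by
  intro i l
  rcases eq_or_ne l j with rfl | hl
  · simpa using hv i
  · simpa [updateCol_ne hl] using hM i l

lemma add_vecMulVec_single {M : Matrix (Fin m) (Fin n) R} {α β} (hM : IsHomog 𝒜 M α β)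
    {j : Fin n} {v : Fin m → R} (hv : ∀ i, v i ∈ 𝒜 (α i * (β j)⁻¹)) :
    IsHomog 𝒜 (M + vecMulVec v (Pi.single j 1)) α β := by
  intro i l
  rcases eq_or_ne l j with rfl | hl
  · simpa [vecMulVec_apply] using add_mem (hM i l) (hv i)
  · simpa [vecMulVec_apply, hl] using hM i l

lemma finBlocks {m' n' : ℕ} {X : Matrix (Fin m) (Fin n) R} {Y : Matrix (Fin m) (Fin n') R}
    {Z : Matrix (Fin m') (Fin n) R} {W : Matrix (Fin m') (Fin n') R} {α α' β β'}
    (hX : IsHomog 𝒜 X α β) (hY : IsHomog 𝒜 Y α β') (hZ : IsHomog 𝒜 Z α' β)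
    (hW : IsHomog 𝒜 W α' β') :
    IsHomog 𝒜 (finBlocks X Y Z W) (Fin.append α α') (Fin.append β β') := by
  intro i j
  refine Fin.addCases (fun i => Fin.addCases (fun j => ?_) (fun j => ?_) j)
    (fun i => Fin.addCases (fun j => ?_) (fun j => ?_) j) i
  · simpa using hX i j
  · simpa using hY i j
  · simpa using hZ i j
  · simpa using hW i j

end IsHomog

lemma not_isGrFull_mul_of_col_eq_zero {N : ℕ} {X Y : Matrix (Fin N) (Fin N) R} {α γ β}
    (hX : IsHomog 𝒜 X α γ) (hY : IsHomog 𝒜 Y γ β) {j : Fin N} (hj : ∀ i, X i j = 0) :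
    ¬ IsGrFull 𝒜 (X * Y) := by
  cases N with
  | zero => exact j.elim0
  | succ N =>
    intro hfull
    have := hfull N (X.submatrix id j.succAbove) (Y.submatrix j.succAbove id) α
      (γ ∘ j.succAbove) β (fun i k => hX i _) (fun k l => hY _ l)
      (by ext i l; simp [mul_apply, Fin.sum_univ_succAbove _ j, hj])
    omega

end Homogeneous

namespace IsGrPrimeMatrixIdeal

variable {Γ : Type u} [Group Γ] {R : Type v} [Ring R] {𝒜 : Γ → AddSubgroup R}
  {P : Set (SqMat R)} {n m N : ℕ}

lemma submatrix_mem_iff (hP : IsGrPrimeMatrixIdeal 𝒜 P) (M : Matrix (Fin N) (Fin N) R)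
    (e f : Equiv.Perm (Fin N)) :
    (⟨N, M.submatrix e f⟩ : SqMat R) ∈ P ↔ (⟨N, M⟩ : SqMat R) ∈ P := by
  refine ⟨fun h => ?_, hP.pm6 M e f⟩
  simpa [submatrix_submatrix] using hP.pm6 _ e⁻¹ f⁻¹ h

lemma finBlocks_mem_iff_swap_rows (hP : IsGrPrimeMatrixIdeal 𝒜 P)
    (X Y Z W : Matrix (Fin n) (Fin n) R) :
    (⟨n + n, finBlocks X Y Z W⟩ : SqMat R) ∈ P ↔ (⟨n + n, finBlocks Z W X Y⟩ : SqMat R) ∈ P := by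
  rw [← finBlocks_submatrix_finAddFlip_id, ← Equiv.Perm.coe_one, hP.submatrix_mem_iff]

lemma diagSum_mem_comm (hP : IsGrPrimeMatrixIdeal 𝒜 P) (X Y : Matrix (Fin n) (Fin n) R) :
    (⟨n + n, diagSum X Y⟩ : SqMat R) ∈ P ↔ (⟨n + n, diagSum Y X⟩ : SqMat R) ∈ P := by
  rw [diagSum_eq_finBlocks, ← finBlocks_submatrix_finAddFlip, hP.submatrix_mem_iff,
    diagSum_eq_finBlocks]

lemma diagSum_mem_iff_left (hP : IsGrPrimeMatrixIdeal 𝒜 P) {X : Matrix (Fin n) (Fin n) R}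
    {Y : Matrix (Fin m) (Fin m) R} (hX : IsHomogSq 𝒜 X) (hY : IsHomogSq 𝒜 Y)
    (hYP : (⟨m, Y⟩ : SqMat R) ∉ P) :
    (⟨n + m, diagSum X Y⟩ : SqMat R) ∈ P ↔ (⟨n, X⟩ : SqMat R) ∈ P :=
  ⟨fun h => (hP.pm4 X Y hX hY h).resolve_right hYP, fun h => hP.pm3 X Y h hY⟩

lemma one_notMem (hP : IsGrPrimeMatrixIdeal 𝒜 P) (hone : (1 : R) ∈ 𝒜 1) :
    ∀ n, (⟨n, (1 : Matrix (Fin n) (Fin n) R)⟩ : SqMat R) ∉ P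
  | 0, h => hP.pm5 <| by
    simpa [diagSum_eq_finBlocks, finBlocks_one_one] using
      hP.pm3 _ (1 : Matrix (Fin 1) (Fin 1) R) h ⟨1, 1, .one hone 1⟩
  | k + 1, h => by
    rw [← finBlocks_one_one (n := k) (m := 1), ← diagSum_eq_finBlocks] at h
    rcases hP.pm4 _ _ ⟨1, 1, .one hone 1⟩ ⟨1, 1, .one hone 1⟩ h with h | h
    exacts [hP.one_notMem hone k h, hP.pm5 h]

lemma add_vecMulVec_single_mem_iff (hP : IsGrPrimeMatrixIdeal 𝒜 P)
    {M : Matrix (Fin N) (Fin N) R} {α β} (hM : IsHomog 𝒜 M α β) {j : Fin N} {v : Fin N → R}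
    (hv : ∀ i, v i ∈ 𝒜 (α i * (β j)⁻¹)) (hpos : (⟨N, M.updateCol j v⟩ : SqMat R) ∈ P)
    (hneg : (⟨N, M.updateCol j (-v)⟩ : SqMat R) ∈ P) :
    (⟨N, M + vecMulVec v (Pi.single j 1)⟩ : SqMat R) ∈ P ↔ (⟨N, M⟩ : SqMat R) ∈ P := by
  constructor
  · refine fun h => hP.pm2 _ _ _ h hneg
      ⟨⟨α, β, hM.add_vecMulVec_single hv, hM.updateCol fun i => neg_mem (hv i)⟩,
        Or.inl ⟨j, fun i l hl => ?_, fun i l => ?_⟩⟩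
    · simp [vecMulVec_apply, hl]
    · split_ifs with hl <;> simp [vecMulVec_apply, hl]
  · refine fun h => hP.pm2 _ _ _ h hpos
      ⟨⟨α, β, hM, hM.updateCol hv⟩, Or.inl ⟨j, fun i l hl => ?_, fun i l => ?_⟩⟩
    · simp [updateCol_ne hl]
    · split_ifs with hl <;> simp [vecMulVec_apply, hl]

lemma mul_mem_of_col_eq_zero (hP : IsGrPrimeMatrixIdeal 𝒜 P)
    (hmul : ∀ {γ δ : Γ} {x y : R}, x ∈ 𝒜 γ → y ∈ 𝒜 δ → x * y ∈ 𝒜 (γ * δ))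
    {X Y : Matrix (Fin N) (Fin N) R} {α γ β} (hX : IsHomog 𝒜 X α γ) (hY : IsHomog 𝒜 Y γ β)
    {j : Fin N} (hj : ∀ i, X i j = 0) : (⟨N, X * Y⟩ : SqMat R) ∈ P :=
  hP.pm1 _ ⟨α, β, hX.mul hmul hY⟩ (not_isGrFull_mul_of_col_eq_zero hX hY hj)

lemma mul_one_add_vecMulVec_single_mem_iff (hP : IsGrPrimeMatrixIdeal 𝒜 P)
    (hone : (1 : R) ∈ 𝒜 1)
    (hmul : ∀ {γ δ : Γ} {x y : R}, x ∈ 𝒜 γ → y ∈ 𝒜 δ → x * y ∈ 𝒜 (γ * δ))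
    {M : Matrix (Fin N) (Fin N) R} {α β} (hM : IsHomog 𝒜 M α β) {j : Fin N} {c : Fin N → R}
    (hc : ∀ i, c i ∈ 𝒜 (β i * (β j)⁻¹)) (hcj : c j = 0) :
    (⟨N, M * (1 + vecMulVec c (Pi.single j 1))⟩ : SqMat R) ∈ P ↔ (⟨N, M⟩ : SqMat R) ∈ P := by
  have updateCol_mem : ∀ c : Fin N → R, (∀ i, c i ∈ 𝒜 (β i * (β j)⁻¹)) → c j = 0 →
      (⟨N, M.updateCol j (M *ᵥ c)⟩ : SqMat R) ∈ P := by
    intro c hc hcj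
    have factor :
        M.updateCol j (M *ᵥ c) = M.updateCol j 0 * (1 : Matrix _ _ R).updateCol j c := by
      ext i l
      rcases eq_or_ne l j with rfl | hl
      · simp only [mul_apply, updateCol_self, mulVec, dotProduct]
        refine Finset.sum_congr rfl fun k _ => ?_
        rcases eq_or_ne k l with rfl | hk <;> simp [updateCol_ne, *]
      · simp [mul_apply, updateCol_ne hl, one_apply]
    rw [factor]
    exact hP.mul_mem_of_col_eq_zero hmul (hM.updateCol fun _ => zero_mem _)
      ((IsHomog.one hone β).updateCol hc) (j := j) (fun _ => updateCol_self)
  rw [Matrix.mul_add, Matrix.mul_one, mul_vecMulVec]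
  refine hP.add_vecMulVec_single_mem_iff hM (hM.mulVec_mem hmul hc) (updateCol_mem c hc hcj) ?_
  rw [← mulVec_neg]
  exact updateCol_mem (-c) (fun i => neg_mem (hc i)) (by simp [hcj])

lemma mul_finBlocks_one_mem_iff (hP : IsGrPrimeMatrixIdeal 𝒜 P) (hone : (1 : R) ∈ 𝒜 1)
    (hmul : ∀ {γ δ : Γ} {x y : R}, x ∈ 𝒜 γ → y ∈ 𝒜 δ → x * y ∈ 𝒜 (γ * δ))
    {M : Matrix (Fin (n + m)) (Fin (n + m)) R} {α β β'} (hM : IsHomog 𝒜 M α (Fin.append β β'))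
    {C : Matrix (Fin n) (Fin m) R} (hC : IsHomog 𝒜 C β β') :
    (⟨n + m, M * finBlocks 1 C 0 1⟩ : SqMat R) ∈ P ↔ (⟨n + m, M⟩ : SqMat R) ∈ P := by
  suffices ∀ S : Finset (Fin m), ∀ C : Matrix (Fin n) (Fin m) R, IsHomog 𝒜 C β β' →
      (∀ i, ∀ l ∉ S, C i l = 0) →
      ((⟨n + m, M * finBlocks 1 C 0 1⟩ : SqMat R) ∈ P ↔ (⟨n + m, M⟩ : SqMat R) ∈ P) from
    this Finset.univ C hC (by simp)
  intro S
  induction S using Finset.induction_on with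
  | empty =>
    intro C _ hC0
    obtain rfl : C = 0 := ext fun i l => hC0 i l (Finset.notMem_empty l)
    rw [finBlocks_one_one, Matrix.mul_one]
  | insert t S ht ih =>
    intro C hC hCS
    have hC' : IsHomog 𝒜 (C.updateCol t 0) β β' := hC.updateCol fun _ => zero_mem _
    have hM' := hM.mul hmul ((IsHomog.one hone β).finBlocks hC' (.zero _ _) (.one hone β'))
    rw [← updateCol_zero_add_vecMulVec_single C t, ← finBlocks_one_mul_finBlocks_one,
      ← Matrix.mul_assoc, finBlocks_one_vecMulVec_single,
      hP.mul_one_add_vecMulVec_single_mem_iff hone hmul hM' ?_ (by simp)]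
    · refine ih _ hC' fun i l hl => ?_
      rcases eq_or_ne l t with rfl | hlt
      · simp
      · simpa [updateCol_ne hlt] using hCS i l (by simp [hl, hlt])
    · intro i
      refine Fin.addCases (fun i => ?_) (fun i => ?_) i
      · simpa using hC i t
      · simp

lemma finBlocks_mem_of_col_eq_zero (hP : IsGrPrimeMatrixIdeal 𝒜 P) (hone : (1 : R) ∈ 𝒜 1)
    (hmul : ∀ {γ δ : Γ} {x y : R}, x ∈ 𝒜 γ → y ∈ 𝒜 δ → x * y ∈ 𝒜 (γ * δ))
    {X : Matrix (Fin n) (Fin n) R} {Y : Matrix (Fin m) (Fin m) R} {Z : Matrix (Fin m) (Fin n) R}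
    {α β β' δ} (hX : IsHomog 𝒜 X α β) (hY : IsHomog 𝒜 Y β' δ) (hZ : IsHomog 𝒜 Z β' β)
    {t : Fin n} (ht : ∀ i, X i t = 0) : (⟨n + m, finBlocks X 0 Z Y⟩ : SqMat R) ∈ P := by
  have factor : finBlocks X 0 Z Y = finBlocks X 0 0 1 * finBlocks 1 0 Z Y := by
    simp [finBlocks_mul]
  rw [factor]
  refine hP.mul_mem_of_col_eq_zero hmul (hX.finBlocks (.zero _ _) (.zero _ _) (.one hone β'))
    ((IsHomog.one hone β).finBlocks (.zero _ _) hZ hY) (j := Fin.castAdd m t) fun i => ?_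
  refine Fin.addCases (fun i => ?_) (fun i => ?_) i <;> simp [ht]

lemma finBlocks_zero_mem_iff_diagSum_mem (hP : IsGrPrimeMatrixIdeal 𝒜 P) (hone : (1 : R) ∈ 𝒜 1)
    (hmul : ∀ {γ δ : Γ} {x y : R}, x ∈ 𝒜 γ → y ∈ 𝒜 δ → x * y ∈ 𝒜 (γ * δ))
    {X : Matrix (Fin n) (Fin n) R} {Y : Matrix (Fin m) (Fin m) R} {Z : Matrix (Fin m) (Fin n) R}
    {α β β' δ} (hX : IsHomog 𝒜 X α β) (hY : IsHomog 𝒜 Y β' δ) (hZ : IsHomog 𝒜 Z β' β) :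
    (⟨n + m, finBlocks X 0 Z Y⟩ : SqMat R) ∈ P ↔ (⟨n + m, diagSum X Y⟩ : SqMat R) ∈ P := by
  suffices ∀ S : Finset (Fin n), ∀ Z : Matrix (Fin m) (Fin n) R, IsHomog 𝒜 Z β' β →
      (∀ i, ∀ l ∉ S, Z i l = 0) →
      ((⟨n + m, finBlocks X 0 Z Y⟩ : SqMat R) ∈ P ↔ (⟨n + m, diagSum X Y⟩ : SqMat R) ∈ P) from
    this Finset.univ Z hZ (by simp)
  intro S
  induction S using Finset.induction_on with
  | empty =>
    intro Z _ hZ0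
    obtain rfl : Z = 0 := ext fun i l => hZ0 i l (Finset.notMem_empty l)
    rfl
  | insert t S ht ih =>
    intro Z hZ hZS
    have hZ' : IsHomog 𝒜 (Z.updateCol t 0) β' β := hZ.updateCol fun _ => zero_mem _
    have updateCol_mem : ∀ w : Fin m → R, (∀ i, w i ∈ 𝒜 (β' i * (β t)⁻¹)) →
        (⟨n + m, (finBlocks X 0 (Z.updateCol t 0) Y).updateCol (Fin.castAdd m t)
          (Fin.append 0 w)⟩ : SqMat R) ∈ P := by
      intro w hw
      rw [finBlocks_updateCol_castAdd]
      exact hP.finBlocks_mem_of_col_eq_zero hone hmul (hX.updateCol fun _ => zero_mem _) hY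
        (hZ'.updateCol hw) (t := t) fun _ => updateCol_self
    rw [finBlocks_zero_eq_add_vecMulVec_single X Y Z t,
      hP.add_vecMulVec_single_mem_iff (hX.finBlocks (.zero _ _) hZ' hY) ?_
        (updateCol_mem _ fun i => hZ i t) ?_]
    · refine ih _ hZ' fun i l hl => ?_
      rcases eq_or_ne l t with rfl | hlt
      · simp
      · simpa [updateCol_ne hlt] using hZS i l (by simp [hl, hlt])
    · intro i
      refine Fin.addCases (fun i => ?_) (fun i => ?_) i
      · simp
      · simpa using hZ i t
    · have : -(Fin.append 0 fun i => Z i t : Fin (n + m) → R) =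
          Fin.append 0 fun i => -Z i t := by
        ext i
        refine Fin.addCases (fun i => ?_) (fun i => ?_) i <;> simp
      rw [this]
      exact updateCol_mem _ fun i => neg_mem (hZ i t)

lemma diagSum_mem_iff_diagSum_neg_one_mul_mem (hP : IsGrPrimeMatrixIdeal 𝒜 P)
    (hone : (1 : R) ∈ 𝒜 1)
    (hmul : ∀ {γ δ : Γ} {x y : R}, x ∈ 𝒜 γ → y ∈ 𝒜 δ → x * y ∈ 𝒜 (γ * δ))
    {A B : Matrix (Fin n) (Fin n) R} {α β δ} (hA : IsHomog 𝒜 A α β) (hB : IsHomog 𝒜 B β δ) :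
    (⟨n + n, diagSum A B⟩ : SqMat R) ∈ P ↔ (⟨n + n, diagSum (-1) (A * B)⟩ : SqMat R) ∈ P := by
  have hneg := (IsHomog.one hone β).neg
  have eliminate : finBlocks A 0 (-1) B * finBlocks 1 B 0 1 = finBlocks A (A * B) (-1) 0 := by
    simp [finBlocks_mul]
  calc _ ↔ (⟨n + n, finBlocks A 0 (-1) B⟩ : SqMat R) ∈ P :=
        (hP.finBlocks_zero_mem_iff_diagSum_mem hone hmul hA hB hneg).symm
    _ ↔ (⟨n + n, finBlocks A (A * B) (-1) 0⟩ : SqMat R) ∈ P := by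
        rw [← eliminate,
          hP.mul_finBlocks_one_mem_iff hone hmul (hA.finBlocks (.zero _ _) hneg hB) hB]
    _ ↔ (⟨n + n, finBlocks (-1) 0 A (A * B)⟩ : SqMat R) ∈ P :=
        hP.finBlocks_mem_iff_swap_rows _ _ _ _
    _ ↔ _ := hP.finBlocks_zero_mem_iff_diagSum_mem hone hmul hneg (hA.mul hmul hB) hA

lemma neg_one_notMem (hP : IsGrPrimeMatrixIdeal 𝒜 P) (hone : (1 : R) ∈ 𝒜 1)
    (hmul : ∀ {γ δ : Γ} {x y : R}, x ∈ 𝒜 γ → y ∈ 𝒜 δ → x * y ∈ 𝒜 (γ * δ)) (n : ℕ) :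
    (⟨n, (-1 : Matrix (Fin n) (Fin n) R)⟩ : SqMat R) ∉ P := by
  -- Otherwise the chain of equivalences, run for `(-1, -1)` and backwards for `(1, 1)`,
  -- would put `1 ⊕ 1` into `P`.
  intro h
  have hI := IsHomog.one hone (1 : Fin n → Γ)
  have hneg := hI.neg
  have : (⟨n + n, diagSum 1 1⟩ : SqMat R) ∈ P := by
    rw [hP.diagSum_mem_iff_diagSum_neg_one_mul_mem hone hmul hI hI,
      show (1 : Matrix (Fin n) (Fin n) R) * 1 = -1 * -1 by simp,
      ← hP.diagSum_mem_iff_diagSum_neg_one_mul_mem hone hmul hneg hneg]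
    exact hP.pm3 _ _ h ⟨1, 1, hneg⟩
  exact hP.one_notMem hone n ((hP.diagSum_mem_iff_left ⟨1, 1, hI⟩ ⟨1, 1, hI⟩
    (hP.one_notMem hone n)).1 this)

end IsGrPrimeMatrixIdeal

theorem grPrime_mul_mem_iff_diagSum_mem_general
    {Γ : Type u} [Group Γ] {R : Type v} [Ring R]
    (𝒜 : Γ → AddSubgroup R)
    (hone : (1 : R) ∈ 𝒜 1)
    (hmul : ∀ {γ δ : Γ} {x y : R}, x ∈ 𝒜 γ → y ∈ 𝒜 δ → x * y ∈ 𝒜 (γ * δ))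
    (P : Set (SqMat R)) (hP : IsGrPrimeMatrixIdeal 𝒜 P)
    {n : ℕ} (A B : Matrix (Fin n) (Fin n) R) (α β δ : Fin n → Γ)
    (hA : IsHomog 𝒜 A α β) (hB : IsHomog 𝒜 B β δ) :
    (⟨n, A * B⟩ : SqMat R) ∈ P ↔ (⟨n + n, diagSum A B⟩ : SqMat R) ∈ P := by
  rw [hP.diagSum_mem_iff_diagSum_neg_one_mul_mem hone hmul hA hB, hP.diagSum_mem_comm,
    hP.diagSum_mem_iff_left ⟨α, δ, hA.mul hmul hB⟩ ⟨β, β, (IsHomog.one hone β).neg⟩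
      (hP.neg_one_notMem hone hmul n)]

/-- Let `𝒫` be a gr-prime matrix ideal of the `Γ`-graded ring `R`.
If `A` is an `n × n` homogeneous matrix of distribution `(α, β)` and `B` is an
`n × n` homogeneous matrix of distribution `(β, δ)`, then `A * B ∈ 𝒫` if and only
if `A ⊕ B ∈ 𝒫`. -/
theorem grPrime_mul_mem_iff_diagSum_mem
    {Γ : Type u} [Group Γ] [DecidableEq Γ] {R : Type v} [Ring R]
    (𝒜 : Γ → AddSubgroup R)
    (hinternal : DirectSum.IsInternal 𝒜)
    (hone : (1 : R) ∈ 𝒜 1)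
    (hmul : ∀ {γ δ : Γ} {x y : R}, x ∈ 𝒜 γ → y ∈ 𝒜 δ → x * y ∈ 𝒜 (γ * δ))
    (P : Set (SqMat R)) (hP : IsGrPrimeMatrixIdeal 𝒜 P)
    {n : ℕ} (A B : Matrix (Fin n) (Fin n) R) (α β δ : Fin n → Γ)
    (hA : IsHomog 𝒜 A α β) (hB : IsHomog 𝒜 B β δ) :
    (⟨n, A * B⟩ : SqMat R) ∈ P ↔ (⟨n + n, diagSum A B⟩ : SqMat R) ∈ P :=
  grPrime_mul_mem_iff_diagSum_mem_general 𝒜 hone hmul P hP A B α β δ hA hB
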